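/- Let A have Spark(A) = L+1 with k ≤ L. Then γ(ℓ_p, A, k) is a continuous function of p on [0,1]. -/

import Mathlib

/-!
`γ(p)` is the least `γ` with `∑_S |z_i|^p ≤ γ ∑_{Sᶜ} |z_i|^p` for all admissible `(S, z)`.
Since `k < Spark(A)`, on the kernel the coordinates in `S` are linear functions of those in
`Sᶜ`, which bounds `γ` uniformly for `p ∈ [0, 1]`.

Each single inequality is continuous in `p`, so `γ` is lower semicontinuous. For upper
semicontinuity take unit kernel vectors `z_j` violating `γ(p₀) + ε` at exponents `p_j → p₀`.
If `p₀ > 0`, a limit point of the `z_j` violates it at `p₀`. If `p₀ = 0`, let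
`b_i = lim |z_{j,i}|^{p_j}`. If every kernel vector vanishing on `{b < t}` vanishes at `i₀`,
then `z_{i₀}` is a linear combination of those coordinates, so `b_{i₀} < t`; hence (as a vector
space is not a finite union of proper subspaces) for each level `t > 0` some kernel vector has
support exactly `{b ≥ t}`, and the `ℓ₀` inequality for it compares the level sets of `b` on `S`
and `Sᶜ`. Integrating over `t` gives `∑_S b ≤ γ(0) ∑_{Sᶜ} b`, contradicting the violation.
-/

open Finset MeasureTheory Filter

/-- `phi p x = |x|^p`, with the convention `|x|^0 = 1` for `x ≠ 0` and `phi p 0 = 0`. -/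
noncomputable def phi (p x : ℝ) : ℝ := if x = 0 then 0 else |x| ^ p

open Classical in
/-- support of a vector, as a finset -/
noncomputable def supp {n : ℕ} (z : Fin n → ℝ) : Finset (Fin n) :=
  Finset.univ.filter (fun i => z i ≠ 0)

/-- `Spark(A) = s`: some `s` columns are linearly dependent (a kernel vector with support of
size `s`), and every nonzero kernel vector has support of size at least `s`. -/
def sparkEq {m n : ℕ} (A : Matrix (Fin m) (Fin n) ℝ) (s : ℕ) : Prop :=
  (∃ z, A.mulVec z = 0 ∧ z ≠ 0 ∧ (supp z).card = s) ∧
  (∀ z, A.mulVec z = 0 → z ≠ 0 → s ≤ (supp z).card)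

/-- The set of constants `γ` satisfying the null space property inequality at level `k`. -/
def validNSC {m n : ℕ} (A : Matrix (Fin m) (Fin n) ℝ) (p : ℝ) (k : ℕ) : Set ℝ :=
  {γ | ∀ S : Finset (Fin n), S.card ≤ k → ∀ z, A.mulVec z = 0 →
    ∑ i ∈ S, phi p (z i) ≤ γ * ∑ i ∈ Sᶜ, phi p (z i)}

/-- The null space constant `γ(ℓ_p, A, k)`: the smallest valid constant. -/
noncomputable def gammaNSC {m n : ℕ} (A : Matrix (Fin m) (Fin n) ℝ) (p : ℝ) (k : ℕ) : ℝ :=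
  sInf (validNSC A p k)

/-- The ratio `θ(p, z, S)`. -/
noncomputable def theta {n : ℕ} (p : ℝ) (z : Fin n → ℝ) (S : Finset (Fin n)) : ℝ :=
  (∑ i ∈ S, phi p (z i)) / (∑ i ∈ Sᶜ, phi p (z i))

open scoped Topology ENNReal

lemma phi_nonneg (p x : ℝ) : 0 ≤ phi p x := by
  unfold phi
  split_ifs
  · exact le_rfl
  · positivity

lemma phi_pos {p x : ℝ} (hx : x ≠ 0) : 0 < phi p x := by
  rw [phi, if_neg hx]
  positivity

lemma phi_eq_rpow {p : ℝ} (hp : 0 < p) (x : ℝ) : phi p x = |x| ^ p := by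
  unfold phi
  split_ifs with hx
  · rw [hx, abs_zero, Real.zero_rpow hp.ne']
  · rfl

lemma sum_phi_zero_left {ι : Type*} (T : Finset ι) (v : ι → ℝ) :
    ∑ i ∈ T, phi 0 (v i) = #{i ∈ T | v i ≠ 0} := by
  simp [phi, Finset.sum_ite]

lemma phi_le_one {p x : ℝ} (hp : 0 ≤ p) (hx : |x| ≤ 1) : phi p x ≤ 1 := by
  unfold phi
  split_ifs
  · exact zero_le_one
  · exact Real.rpow_le_one (abs_nonneg x) hx hp

lemma one_le_phi {p x : ℝ} (hp : 0 ≤ p) (hx : 1 ≤ |x|) : 1 ≤ phi p x := by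
  have hx₀ : x ≠ 0 := by
    rintro rfl
    norm_num at hx
  rw [phi, if_neg hx₀]
  exact Real.one_le_rpow hx hp

lemma phi_mul (p : ℝ) {c : ℝ} (hc : c ≠ 0) (x : ℝ) : phi p (c * x) = |c| ^ p * phi p x := by
  rcases eq_or_ne x 0 with rfl | hx
  · simp [phi]
  · rw [phi, phi, if_neg (mul_ne_zero hc hx), if_neg hx, abs_mul,
      Real.mul_rpow (abs_nonneg c) (abs_nonneg x)]

lemma phi_le_rpow_mul_phi {p C x y : ℝ} (hp : 0 ≤ p) (hC : 0 ≤ C) (h : |x| ≤ C * |y|) :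
    phi p x ≤ C ^ p * phi p y := by
  rcases eq_or_ne x 0 with rfl | hx
  · rw [phi, if_pos rfl]
    exact mul_nonneg (Real.rpow_nonneg hC p) (phi_nonneg p y)
  have hy : y ≠ 0 := by
    rintro rfl
    simp only [abs_zero, mul_zero] at h
    exact hx (abs_nonpos_iff.1 h)
  rw [phi, phi, if_neg hx, if_neg hy, ← Real.mul_rpow hC (abs_nonneg y)]
  exact Real.rpow_le_rpow (abs_nonneg x) h hp

lemma continuous_phi_left (x : ℝ) : Continuous fun p => phi p x := by
  unfold phi
  split_ifs with hx
  · exact continuous_const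
  · exact continuous_const.rpow continuous_id fun _ => Or.inl (abs_pos.2 hx).ne'

lemma continuousAt_phi {p : ℝ} (hp : 0 < p) (x : ℝ) :
    ContinuousAt (fun q : ℝ × ℝ => phi q.1 q.2) (p, x) := by
  have h : (fun q : ℝ × ℝ => |q.2| ^ q.1) =ᶠ[𝓝 (p, x)] fun q => phi q.1 q.2 :=
    (continuous_fst.continuousAt.eventually (lt_mem_nhds hp)).mono fun q hq =>
      (phi_eq_rpow hq q.2).symm
  exact (continuous_snd.abs.continuousAt.rpow continuous_fst.continuousAt (Or.inr hp)).congr h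

lemma one_le_sum_phi {ι : Type*} [Fintype ι] {p : ℝ} (hp : 0 ≤ p) {v : ι → ℝ} (hv : ‖v‖ = 1) :
    1 ≤ ∑ i, phi p (v i) := by
  obtain ⟨i, hi⟩ : ∃ i, 1 ≤ |v i| := by
    by_contra! h
    exact (hv ▸ (pi_norm_lt_iff one_pos).2 fun i => by simpa using h i).false
  exact (one_le_phi hp hi).trans (single_le_sum (fun j _ => phi_nonneg p (v j)) (mem_univ i))

section LinearAlgebra

variable {ι : Type*}

lemma exists_mem_forall_apply_ne_zero {K E : Type*} [Field K] [Infinite K] [AddCommGroup E]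
    [Module K E] (V : Submodule K E) (s : Finset ι) (f : ι → E →ₗ[K] K)
    (h : ∀ i ∈ s, ∃ v ∈ V, f i v ≠ 0) : ∃ v ∈ V, ∀ i ∈ s, f i v ≠ 0 := by
  let W : s → Submodule K V := fun i => LinearMap.ker ((f i).comp V.subtype)
  have hW : ∀ i, W i ≠ ⊤ := by
    rintro ⟨i, hi⟩ htop
    obtain ⟨v, hvV, hv⟩ := h i hi
    exact hv (LinearMap.mem_ker.1 (htop ▸ Submodule.mem_top : (⟨v, hvV⟩ : V) ∈ W ⟨i, hi⟩))
  have hcard : (univ : Finset s).card < ENat.card K := by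
    simp [ENat.card_eq_top_of_infinite]
  obtain ⟨v, -, hv⟩ :=
    Set.exists_of_ssubset (Submodule.iUnion_ssubset_of_forall_ne_top_of_card_lt _ W hW hcard)
  exact ⟨v, v.2, fun i hi hvi => hv (Set.mem_biUnion (mem_univ ⟨i, hi⟩) (by exact hvi))⟩

lemma exists_abs_le_mul_of_ker_le {V : Submodule ℝ (ι → ℝ)} {I : Finset ι} {i₀ : ι}
    (h : ∀ v ∈ V, (∀ i ∈ I, v i = 0) → v i₀ = 0) :
    ∃ C, 1 ≤ C ∧ ∀ v ∈ V, ∀ c, 0 ≤ c → (∀ i ∈ I, |v i| ≤ c) → |v i₀| ≤ C * c := by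
  let L : I → V →ₗ[ℝ] ℝ := fun i => (LinearMap.proj (i : ι)).comp V.subtype
  have hker : ⨅ i, LinearMap.ker (L i) ≤ LinearMap.ker ((LinearMap.proj i₀).comp V.subtype) := by
    intro v hv
    simp only [Submodule.mem_iInf, LinearMap.mem_ker] at hv ⊢
    exact h v v.2 fun i hi => hv ⟨i, hi⟩
  obtain ⟨a, ha⟩ := (Submodule.mem_span_range_iff_exists_fun ℝ).1 (mem_span_of_iInf_ker_le_ker hker)
  have ha₀ : 0 ≤ ∑ i, |a i| := sum_nonneg fun i _ => abs_nonneg (a i)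
  refine ⟨∑ i, |a i| + 1, by linarith, fun v hv c hc hvc => ?_⟩
  have hv₀ : v i₀ = ∑ i : I, a i * v i := by
    simpa [L] using (LinearMap.congr_fun ha ⟨v, hv⟩).symm
  calc |v i₀| ≤ ∑ i : I, |a i| * |v i| := by
        rw [hv₀]
        exact (abs_sum_le_sum_abs _ _).trans_eq (by simp [abs_mul])
    _ ≤ ∑ i : I, |a i| * c :=
        sum_le_sum fun i _ => mul_le_mul_of_nonneg_left (hvc i i.2) (abs_nonneg _)
    _ ≤ (∑ i, |a i| + 1) * c := by rw [← sum_mul]; nlinarith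

lemma exists_phi_le_mul_sum_phi {V : Submodule ℝ (ι → ℝ)} {I : Finset ι} {i₀ : ι}
    (h : ∀ v ∈ V, (∀ i ∈ I, v i = 0) → v i₀ = 0) {p : ℝ} (hp₀ : 0 ≤ p) (hp₁ : p ≤ 1) :
    ∃ C, ∀ v ∈ V, phi p (v i₀) ≤ C * ∑ i ∈ I, phi p (v i) := by
  obtain ⟨C, hC, hCv⟩ := exists_abs_le_mul_of_ker_le h
  refine ⟨C, fun v hv => ?_⟩
  rcases I.eq_empty_or_nonempty with rfl | hI
  · simp [h v hv (by simp), phi]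
  obtain ⟨j, hj, hjmax⟩ := I.exists_max_image (fun i => |v i|) hI
  calc phi p (v i₀) ≤ C ^ p * phi p (v j) :=
        phi_le_rpow_mul_phi hp₀ (by linarith) (hCv v hv _ (abs_nonneg _) hjmax)
    _ ≤ C * ∑ i ∈ I, phi p (v i) := by
        refine mul_le_mul ?_ (single_le_sum (fun i _ => phi_nonneg p (v i)) hj)
          (phi_nonneg _ _) (by linarith)
        simpa using Real.rpow_le_rpow_of_exponent_le hC hp₁

end LinearAlgebra

-- Layer cake: `b i = ∫ t in Ioi 0, 1[t ≤ b i]`.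
lemma sum_le_mul_sum_of_card_le {ι : Type*} (S T : Finset ι) {b : ι → ℝ} (hb : ∀ i, 0 ≤ b i)
    {g : ℝ} (hg : 0 ≤ g) (h : ∀ t > 0, (#{i ∈ S | t ≤ b i} : ℝ) ≤ g * #{i ∈ T | t ≤ b i}) :
    ∑ i ∈ S, b i ≤ g * ∑ i ∈ T, b i := by
  classical
  have hlayer : ∀ U : Finset ι,
      ENNReal.ofReal (∑ i ∈ U, b i) = ∫⁻ t, ∑ i ∈ U, (Set.Ioc 0 (b i)).indicator 1 t := by
    intro U
    rw [lintegral_finsetSum _ fun i _ => measurable_one.indicator measurableSet_Ioc,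
      ENNReal.ofReal_sum_of_nonneg fun i _ => hb i]
    simp [lintegral_indicator_one measurableSet_Ioc, Real.volume_Ioc]
  have hcount : ∀ (U : Finset ι) t, ∑ i ∈ U, (Set.Ioc 0 (b i)).indicator (1 : ℝ → ℝ≥0∞) t =
      #{i ∈ U | t ∈ Set.Ioc 0 (b i)} := by
    intro U t
    simp [Set.indicator_apply, sum_boole]
  have hpt : ∀ t, ∑ i ∈ S, (Set.Ioc 0 (b i)).indicator 1 t ≤
      ENNReal.ofReal g * ∑ i ∈ T, (Set.Ioc 0 (b i)).indicator 1 t := by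
    intro t
    rw [hcount, hcount]
    rcases le_or_gt t 0 with ht | ht
    · simp [ht.not_gt]
    · have := ENNReal.ofReal_le_ofReal (h t ht)
      rw [ENNReal.ofReal_mul hg, ENNReal.ofReal_natCast, ENNReal.ofReal_natCast] at this
      simpa [Set.mem_Ioc, ht] using this
  have := lintegral_mono (μ := volume) hpt
  rw [lintegral_const_mul' _ _ ENNReal.ofReal_ne_top, ← hlayer, ← hlayer,
    ← ENNReal.ofReal_mul hg] at this
  exact (ENNReal.ofReal_le_ofReal_iff (mul_nonneg hg (sum_nonneg fun i _ => hb i))).1 this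

lemma le_of_mul_le_of_le_mul {a b y γ : ℝ} (hb : 0 ≤ b) (hab : 0 < a + b)
    (hy : y * b ≤ a) (hγ : a ≤ γ * b) : y ≤ γ := by
  have hb' : 0 < b := by
    rcases hb.lt_or_eq with hb' | rfl
    · exact hb'
    · simp only [mul_zero] at hγ
      linarith
  exact le_of_mul_le_mul_right (hy.trans hγ) hb'

section ExponentLimits

variable {ι : Type*} {V : Submodule ℝ (ι → ℝ)} {p : ℕ → ℝ} {z : ℕ → ι → ℝ} {b : ι → ℝ}

lemma le_of_tendsto_phi_of_ker_le (hzV : ∀ j, z j ∈ V) (hp_pos : ∀ j, 0 < p j)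
    (hp : Tendsto p atTop (𝓝 0))
    (hb : ∀ i, Tendsto (fun j => phi (p j) (z j i)) atTop (𝓝 (b i)))
    {I : Finset ι} {i₀ : ι} (h : ∀ v ∈ V, (∀ i ∈ I, v i = 0) → v i₀ = 0)
    {r : ℝ} (hr : 0 < r) (hI : ∀ i ∈ I, b i < r) : b i₀ ≤ r := by
  obtain ⟨C, hC, hCv⟩ := exists_abs_le_mul_of_ker_le h
  have hCp : Tendsto (fun j => C ^ p j * r) atTop (𝓝 r) := by
    simpa using ((Real.continuousAt_const_rpow (by linarith : C ≠ 0)).tendsto.comp hp).mul_const r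
  refine le_of_tendsto_of_tendsto (hb i₀) hCp ?_
  filter_upwards [(eventually_all_finset I).2 fun i hi => (hb i).eventually_lt_const (hI i hi)]
    with j hj
  have hsmall : ∀ i ∈ I, |z j i| ≤ r ^ (p j)⁻¹ := fun i hi => by
    rw [Real.le_rpow_inv_iff_of_pos (abs_nonneg _) hr.le (hp_pos j), ← phi_eq_rpow (hp_pos j)]
    exact (hj i hi).le
  rw [phi_eq_rpow (hp_pos j)]
  calc |z j i₀| ^ p j ≤ (C * r ^ (p j)⁻¹) ^ p j :=
        Real.rpow_le_rpow (abs_nonneg _) (hCv _ (hzV j) _ (by positivity) hsmall) (hp_pos j).le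
    _ = C ^ p j * r := by
        rw [Real.mul_rpow (by linarith) (by positivity), Real.rpow_inv_rpow hr.le (hp_pos j).ne']

variable [Fintype ι]

lemma exists_mem_ne_zero_iff_of_tendsto_phi (hzV : ∀ j, z j ∈ V) (hp_pos : ∀ j, 0 < p j)
    (hp : Tendsto p atTop (𝓝 0))
    (hb : ∀ i, Tendsto (fun j => phi (p j) (z j i)) atTop (𝓝 (b i))) {t : ℝ} (ht : 0 < t) :
    ∃ v ∈ V, ∀ i, v i ≠ 0 ↔ t ≤ b i := by
  classical
  set I : Finset ι := {i | b i < t}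
  set W : Submodule ℝ (ι → ℝ) := V ⊓ ⨅ i ∈ I, LinearMap.ker (LinearMap.proj i)
  have hW : ∀ v, v ∈ W ↔ v ∈ V ∧ ∀ i ∈ I, v i = 0 := by simp [W]
  have hsupp : ∀ i₀ ∈ ({i | t ≤ b i} : Finset ι), ∃ v ∈ W, v i₀ ≠ 0 := by
    intro i₀ hi₀
    by_contra! hzero
    obtain ⟨r, ⟨hr, hIr⟩, hrt⟩ : ∃ r, (0 < r ∧ ∀ i ∈ I, b i < r) ∧ r < t :=
      (((eventually_gt_nhds ht).and ((eventually_all_finset I).2 fun i hi =>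
        eventually_gt_nhds (by simpa [I] using hi))).filter_mono
        (nhdsWithin_le_nhds (s := Set.Iio t)) |>.and self_mem_nhdsWithin).exists
    have := le_of_tendsto_phi_of_ker_le hzV hp_pos hp hb
      (fun v hv hvI => hzero v ((hW v).2 ⟨hv, hvI⟩)) hr hIr
    simp only [mem_filter, mem_univ, true_and] at hi₀
    linarith
  obtain ⟨v, hvW, hv⟩ := exists_mem_forall_apply_ne_zero W _ (fun i => LinearMap.proj i) hsupp
  refine ⟨v, ((hW v).1 hvW).1, fun i => ⟨fun hvi => ?_, fun hi => hv i (by simpa using hi)⟩⟩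
  by_contra hti
  exact hvi (((hW v).1 hvW).2 i (by simpa [I] using hti))

variable [DecidableEq ι]

lemma sum_le_mul_sum_of_tendsto_phi (hzV : ∀ j, z j ∈ V) (hp_pos : ∀ j, 0 < p j)
    (hp : Tendsto p atTop (𝓝 0))
    (hb : ∀ i, Tendsto (fun j => phi (p j) (z j i)) atTop (𝓝 (b i)))
    (S : Finset ι) {γ : ℝ} (hγ : 0 ≤ γ)
    (hV : ∀ v ∈ V, ∑ i ∈ S, phi 0 (v i) ≤ γ * ∑ i ∈ Sᶜ, phi 0 (v i)) :
    ∑ i ∈ S, b i ≤ γ * ∑ i ∈ Sᶜ, b i := by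
  refine sum_le_mul_sum_of_card_le S Sᶜ
    (fun i => ge_of_tendsto' (hb i) fun j => phi_nonneg _ _) hγ fun t ht => ?_
  obtain ⟨v, hv, hvb⟩ := exists_mem_ne_zero_iff_of_tendsto_phi hzV hp_pos hp hb ht
  simpa only [sum_phi_zero_left, hvb] using hV v hv

lemma le_of_tendsto_exponent_zero (hzV : ∀ j, z j ∈ V) (hz : ∀ j, ‖z j‖ = 1)
    (hp_pos : ∀ j, 0 < p j) (hp : Tendsto p atTop (𝓝 0)) {S : Finset ι} {y γ : ℝ} (hγ : 0 ≤ γ)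
    (hy : ∀ j, y * ∑ i ∈ Sᶜ, phi (p j) (z j i) ≤ ∑ i ∈ S, phi (p j) (z j i))
    (hV : ∀ v ∈ V, ∑ i ∈ S, phi 0 (v i) ≤ γ * ∑ i ∈ Sᶜ, phi 0 (v i)) : y ≤ γ := by
  have hmem : ∀ j, (fun i => phi (p j) (z j i)) ∈ Set.Icc (0 : ι → ℝ) 1 := fun j =>
    ⟨fun i => phi_nonneg _ _, fun i => phi_le_one (hp_pos j).le
      (by simpa [hz j] using norm_le_pi_norm (z j) i)⟩
  obtain ⟨b, -, ψ, hψ, hb⟩ := isCompact_Icc.tendsto_subseq hmem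
  have hbi : ∀ i, Tendsto (fun j => phi (p (ψ j)) (z (ψ j) i)) atTop (𝓝 (b i)) :=
    fun i => tendsto_pi_nhds.1 hb i
  have hb₀ : ∀ i, 0 ≤ b i := fun i => ge_of_tendsto' (hbi i) fun j => phi_nonneg _ _
  have hsum : ∀ U : Finset ι, Tendsto (fun j => ∑ i ∈ U, phi (p (ψ j)) (z (ψ j) i)) atTop
      (𝓝 (∑ i ∈ U, b i)) := fun U => tendsto_finsetSum U fun i _ => hbi i
  refine le_of_mul_le_of_le_mul (sum_nonneg fun i _ => hb₀ i) ?_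
    (le_of_tendsto_of_tendsto' ((hsum Sᶜ).const_mul y) (hsum S) fun j => hy (ψ j))
    (sum_le_mul_sum_of_tendsto_phi (fun j => hzV _) (fun j => hp_pos _)
      (hp.comp hψ.tendsto_atTop) hbi S hγ hV)
  rw [sum_add_sum_compl]
  exact one_pos.trans_le (ge_of_tendsto' (hsum univ) fun j => one_le_sum_phi (hp_pos _).le (hz _))

lemma le_of_tendsto_exponent_pos (hzV : ∀ j, z j ∈ V) (hz : ∀ j, ‖z j‖ = 1) {p₀ : ℝ}
    (hp₀ : 0 < p₀) (hp : Tendsto p atTop (𝓝 p₀)) {S : Finset ι} {y γ : ℝ}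
    (hy : ∀ j, y * ∑ i ∈ Sᶜ, phi (p j) (z j i) ≤ ∑ i ∈ S, phi (p j) (z j i))
    (hV : ∀ v ∈ V, ∑ i ∈ S, phi p₀ (v i) ≤ γ * ∑ i ∈ Sᶜ, phi p₀ (v i)) : y ≤ γ := by
  have hK : IsCompact (Metric.sphere (0 : ι → ℝ) 1 ∩ V) :=
    (isCompact_sphere 0 1).inter_right V.closed_of_finiteDimensional
  obtain ⟨w, ⟨hw, hwV⟩, ψ, hψ, hzw⟩ :=
    hK.tendsto_subseq fun j => ⟨by simpa using hz j, hzV j⟩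
  have hsum : ∀ U : Finset ι, Tendsto (fun j => ∑ i ∈ U, phi (p (ψ j)) (z (ψ j) i)) atTop
      (𝓝 (∑ i ∈ U, phi p₀ (w i))) := fun U => tendsto_finsetSum U fun i _ =>
    (continuousAt_phi hp₀ (w i)).tendsto.comp
      ((hp.comp hψ.tendsto_atTop).prodMk_nhds (tendsto_pi_nhds.1 hzw i))
  refine le_of_mul_le_of_le_mul (sum_nonneg fun i _ => phi_nonneg _ _) ?_
    (le_of_tendsto_of_tendsto' ((hsum Sᶜ).const_mul y) (hsum S) fun j => hy (ψ j)) (hV w hwV)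
  rw [sum_add_sum_compl]
  exact one_pos.trans_le (one_le_sum_phi hp₀.le (by simpa using hw))

end ExponentLimits

section NullSpaceConstant

variable {M N L k : ℕ} {A : Matrix (Fin M) (Fin N) ℝ}

lemma sparkEq.eq_zero_of_forall_notMem (hspark : sparkEq A (L + 1)) {z : Fin N → ℝ}
    (hz : A.mulVec z = 0) {S : Finset (Fin N)} (hS : S.card ≤ L) (hzS : ∀ i ∉ S, z i = 0) :
    z = 0 := by
  by_contra hz₀
  have hsub : supp z ⊆ S := fun i hi => by
    by_contra hiS
    simp [supp, hzS i hiS] at hi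
  have := hspark.2 z hz hz₀
  have := card_le_card hsub
  omega

lemma validNSC_nonempty (hspark : sparkEq A (L + 1)) (hk : k ≤ L) {p : ℝ} (hp₀ : 0 ≤ p)
    (hp₁ : p ≤ 1) : (validNSC A p k).Nonempty := by
  have hbound : ∀ S : Finset (Fin N), ∀ᶠ C in atTop, S.card ≤ k → ∀ i ∈ S, ∀ z,
      A.mulVec z = 0 → phi p (z i) ≤ C * ∑ j ∈ Sᶜ, phi p (z j) := by
    intro S
    by_cases hS : S.card ≤ k
    · refine ((eventually_all_finset S).2 fun i hi => ?_).mono fun C hC _ => hC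
      obtain ⟨C, hC⟩ := exists_phi_le_mul_sum_phi (V := LinearMap.ker A.mulVecLin) (I := Sᶜ)
        (fun z hz hzS => congr_fun (hspark.eq_zero_of_forall_notMem hz (hS.trans hk)
          fun j hj => hzS j (mem_compl.2 hj)) i) hp₀ hp₁
      exact (eventually_ge_atTop C).mono fun C' hC' z hz => (hC z hz).trans
        (mul_le_mul_of_nonneg_right hC' (sum_nonneg fun j _ => phi_nonneg p (z j)))
    · exact Eventually.of_forall fun C h => absurd h hS
  obtain ⟨C, hC₀, hC⟩ := ((eventually_ge_atTop 0).and (eventually_all.2 hbound)).exists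
  refine ⟨k * C, fun S hS z hz => ?_⟩
  have hsum : 0 ≤ ∑ j ∈ Sᶜ, phi p (z j) := sum_nonneg fun j _ => phi_nonneg p (z j)
  calc ∑ i ∈ S, phi p (z i) ≤ ∑ i ∈ S, C * ∑ j ∈ Sᶜ, phi p (z j) :=
        sum_le_sum fun i hi => hC S hS i hi z hz
    _ = S.card * C * ∑ j ∈ Sᶜ, phi p (z j) := by rw [sum_const, nsmul_eq_mul, mul_assoc]
    _ ≤ k * C * ∑ j ∈ Sᶜ, phi p (z j) := by gcongr

lemma nonneg_of_mem_validNSC {s : ℕ} (hspark : sparkEq A s) {p γ : ℝ}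
    (hγ : γ ∈ validNSC A p k) : 0 ≤ γ := by
  obtain ⟨z, hz, hz₀, -⟩ := hspark.1
  obtain ⟨i, hi⟩ := Function.ne_iff.1 hz₀
  have hpos : 0 < ∑ j, phi p (z j) :=
    sum_pos' (fun j _ => phi_nonneg p (z j)) ⟨i, mem_univ i, phi_pos hi⟩
  have := hγ ∅ (by simp) z hz
  simp only [sum_empty, compl_empty] at this
  exact nonneg_of_mul_nonneg_left this hpos

lemma isClosed_validNSC (A : Matrix (Fin M) (Fin N) ℝ) (p : ℝ) (k : ℕ) :
    IsClosed (validNSC A p k) := by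
  simp only [validNSC, Set.ofPred_forall]
  exact isClosed_iInter fun S => isClosed_iInter fun _ => isClosed_iInter fun z =>
    isClosed_iInter fun _ => isClosed_le continuous_const (continuous_id.mul continuous_const)

lemma gammaNSC_le_iff (hspark : sparkEq A (L + 1)) (hk : k ≤ L) {p : ℝ}
    (hp : p ∈ Set.Icc (0 : ℝ) 1) {c : ℝ} : gammaNSC A p k ≤ c ↔ c ∈ validNSC A p k := by
  have hne := validNSC_nonempty hspark hk hp.1 hp.2
  have hbdd : BddBelow (validNSC A p k) := ⟨0, fun γ hγ => nonneg_of_mem_validNSC hspark hγ⟩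
  refine ⟨fun hc S hS z hz => ?_, fun hc => csInf_le hbdd hc⟩
  calc ∑ i ∈ S, phi p (z i) ≤ gammaNSC A p k * ∑ i ∈ Sᶜ, phi p (z i) :=
        (isClosed_validNSC A p k).csInf_mem hne hbdd S hS z hz
    _ ≤ c * ∑ i ∈ Sᶜ, phi p (z i) :=
        mul_le_mul_of_nonneg_right hc (sum_nonneg fun i _ => phi_nonneg p (z i))

lemma exists_norm_eq_one_of_notMem_validNSC {p y : ℝ} (hy : y ∉ validNSC A p k) :
    ∃ S : Finset (Fin N), S.card ≤ k ∧ ∃ z ∈ LinearMap.ker A.mulVecLin, ‖z‖ = 1 ∧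
      y * ∑ i ∈ Sᶜ, phi p (z i) ≤ ∑ i ∈ S, phi p (z i) := by
  simp only [validNSC, Set.mem_ofPred_eq, not_forall, not_le] at hy
  obtain ⟨S, hS, z, hz, hlt⟩ := hy
  have hz₀ : z ≠ 0 := by
    rintro rfl
    simp [phi] at hlt
  have hn : 0 < ‖z‖ := norm_pos_iff.2 hz₀
  have hscale : ∀ T : Finset (Fin N),
      ∑ i ∈ T, phi p ((‖z‖⁻¹ • z) i) = ‖z‖⁻¹ ^ p * ∑ i ∈ T, phi p (z i) := fun T => by
    rw [mul_sum]
    refine sum_congr rfl fun i _ => ?_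
    rw [Pi.smul_apply, smul_eq_mul, phi_mul p (inv_ne_zero hn.ne'), abs_of_pos (inv_pos.2 hn)]
  refine ⟨S, hS, ‖z‖⁻¹ • z, by simp [hz],
    by rw [norm_smul, norm_inv, norm_norm, inv_mul_cancel₀ hn.ne'], ?_⟩
  rw [hscale, hscale, mul_left_comm]
  exact mul_le_mul_of_nonneg_left hlt.le (by positivity)

lemma eventually_lt_gammaNSC (hspark : sparkEq A (L + 1)) (hk : k ≤ L) {p₀ y : ℝ}
    (hp₀ : p₀ ∈ Set.Icc (0 : ℝ) 1) (hy : y < gammaNSC A p₀ k) :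
    ∀ᶠ p in 𝓝[Set.Icc 0 1] p₀, y < gammaNSC A p k := by
  rw [← not_le, gammaNSC_le_iff hspark hk hp₀] at hy
  simp only [validNSC, Set.mem_ofPred_eq, not_forall, not_le] at hy
  obtain ⟨S, hS, z, hz, hlt⟩ := hy
  have hcont : ∀ T : Finset (Fin N), Continuous fun p => ∑ i ∈ T, phi p (z i) :=
    fun T => continuous_finsetSum T fun i _ => continuous_phi_left (z i)
  have hev : ∀ᶠ p in 𝓝 p₀, y * ∑ i ∈ Sᶜ, phi p (z i) < ∑ i ∈ S, phi p (z i) :=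
    (continuous_const.mul (hcont Sᶜ)).continuousAt.eventually_lt (hcont S).continuousAt hlt
  filter_upwards [nhdsWithin_le_nhds hev, self_mem_nhdsWithin] with p hp hpI
  rw [← not_le, gammaNSC_le_iff hspark hk hpI]
  exact fun hy => (hy S hS z hz).not_gt hp

lemma le_gammaNSC_of_frequently_notMem (hspark : sparkEq A (L + 1)) (hk : k ≤ L) {p₀ y : ℝ}
    (hp₀ : p₀ ∈ Set.Icc (0 : ℝ) 1) (h : ∃ᶠ p in 𝓝[Set.Icc 0 1] p₀, y ∉ validNSC A p k) :
    y ≤ gammaNSC A p₀ k := by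
  by_cases hy : y ∈ validNSC A p₀ k
  swap
  · exact (not_le.1 (mt (gammaNSC_le_iff hspark hk hp₀).1 hy)).le
  have hfreq : ∃ᶠ p in 𝓝[Set.Icc 0 1] p₀, ∃ S : Finset (Fin N), (p ∈ Set.Icc (0 : ℝ) 1 ∧
      p ≠ p₀) ∧ S.card ≤ k ∧ ∃ z ∈ LinearMap.ker A.mulVecLin, ‖z‖ = 1 ∧
      y * ∑ i ∈ Sᶜ, phi p (z i) ≤ ∑ i ∈ S, phi p (z i) :=
    (h.and_eventually self_mem_nhdsWithin).mono fun p ⟨hp, hpI⟩ =>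
      let ⟨S, hS⟩ := exists_norm_eq_one_of_notMem_validNSC hp
      ⟨S, ⟨hpI, by rintro rfl; exact hp hy⟩, hS⟩
  obtain ⟨S, hfreqS⟩ := frequently_exists.1 hfreq
  obtain ⟨q, hq, hqS⟩ := exists_seq_forall_of_frequently hfreqS
  choose hqI hS z hzV hz hzy using hqS
  have hq' := tendsto_nhds_of_tendsto_nhdsWithin hq
  have hγ₀ := (gammaNSC_le_iff hspark hk hp₀).1 le_rfl
  have hγ : ∀ v ∈ LinearMap.ker A.mulVecLin, ∑ i ∈ S, phi p₀ (v i) ≤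
      gammaNSC A p₀ k * ∑ i ∈ Sᶜ, phi p₀ (v i) := fun v hv => hγ₀ S (hS 0) v (by simpa using hv)
  rcases hp₀.1.eq_or_lt with rfl | hpos
  · exact le_of_tendsto_exponent_zero hzV hz (fun n => (hqI n).1.1.lt_of_ne (hqI n).2.symm)
      hq' (nonneg_of_mem_validNSC hspark hγ₀) hzy hγ
  · exact le_of_tendsto_exponent_pos hzV hz hpos hq' hzy hγ

lemma eventually_gammaNSC_lt (hspark : sparkEq A (L + 1)) (hk : k ≤ L) {p₀ y : ℝ}
    (hp₀ : p₀ ∈ Set.Icc (0 : ℝ) 1) (hy : gammaNSC A p₀ k < y) :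
    ∀ᶠ p in 𝓝[Set.Icc 0 1] p₀, gammaNSC A p k < y := by
  obtain ⟨y', hy₀, hy'⟩ := exists_between hy
  have h : ∀ᶠ p in 𝓝[Set.Icc 0 1] p₀, y' ∈ validNSC A p k := by
    by_contra h
    exact (le_gammaNSC_of_frequently_notMem hspark hk hp₀ (not_eventually.1 h)).not_gt hy₀
  filter_upwards [h, self_mem_nhdsWithin] with p hp hpI
  exact ((gammaNSC_le_iff hspark hk hpI).2 hp).trans_lt hy'

end NullSpaceConstant

/-- p ↦ γ(ℓ_p,A,k) is continuous on [0,1]. -/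
theorem stmt8 {M N L : ℕ} (A : Matrix (Fin M) (Fin N) ℝ) (hspark : sparkEq A (L + 1))
    (k : ℕ) (hk : k ≤ L) :
    ContinuousOn (fun p => gammaNSC A p k) (Set.Icc (0 : ℝ) 1) := fun _ hp₀ =>
  tendsto_order.2 ⟨fun _ hy => eventually_lt_gammaNSC hspark hk hp₀ hy,
    fun _ hy => eventually_gammaNSC_lt hspark hk hp₀ hy⟩
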